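/- arXiv:1604.04664 — 2 statements merged into one kernel-verified Lean document; each statement's English description precedes it below -/
import Mathlib

section
/- Let G = (V,E) be a finite undirected graph with demand d and capacity c, and let A be a proper assignment (each vertex u is first coordinate at most c(u) times, each vertex v is second coordinate at most d(v) times). Define the unmet demand t(A) = Σ_{v∈V} (d(v) − (number of pairs in A with second coordinate v)). If t(A) > 0 and a proper covering assignment exists for (G,d,c), then there exists a proper assignment A'' with t(A'') < t(A) and |S(A'')| ≤ |S(A)| + 1, where S(A) is the set of vertices occurring as a first coordinate of some pair in A. -/
open Finset

variable {V : Type*}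

/-- Number of pairs in `A` with first coordinate `u` (capacity used by `u`). -/
def outCount [DecidableEq V] (A : Multiset (V × V)) (u : V) : ℕ :=
  A.countP (fun p => p.1 = u)

/-- Number of pairs in `A` with second coordinate `v` (demand of `v` covered). -/
def inCount [DecidableEq V] (A : Multiset (V × V)) (v : V) : ℕ :=
  A.countP (fun p => p.2 = v)

/-- Every pair of the multiset is an edge of `G` or a self-loop. -/
def ValidPairs (G : SimpleGraph V) (A : Multiset (V × V)) : Prop :=
  ∀ p ∈ A, G.Adj p.1 p.2 ∨ p.1 = p.2

/-- The dominating set of an assignment: vertices occurring as first coordinates. -/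
def domSet [DecidableEq V] (A : Multiset (V × V)) : Finset V :=
  (A.map Prod.fst).toFinset

/-- Total unmet demand of an assignment. -/
def unmet [Fintype V] [DecidableEq V] (d : V → ℕ) (A : Multiset (V × V)) : ℕ :=
  ∑ v, (d v - inCount A v)

lemma sum_inCount [Fintype V] [DecidableEq V] (A : Multiset (V × V)) :
    ∑ v, inCount A v = Multiset.card A := by
  induction A using Multiset.induction_on with
  | empty => simp [inCount]
  | cons a s ih =>
    simp only [inCount, Multiset.countP_cons, Multiset.card_cons] at *
    rw [Finset.sum_add_distrib, ih, Finset.sum_ite_eq _ a.2 (fun _ => 1)]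
    simp

lemma unmet_eq [Fintype V] [DecidableEq V] (d : V → ℕ) (A : Multiset (V × V))
    (h : ∀ v, inCount A v ≤ d v) :
    unmet d A = ∑ v, d v - Multiset.card A := by
  rw [unmet, ← sum_inCount A, Finset.sum_tsub_distrib]
  intro v _
  exact h v

lemma mem_domSet [DecidableEq V] {A : Multiset (V × V)} {x : V} :
    x ∈ domSet A ↔ 0 < outCount A x := by
  simp [domSet, outCount, Multiset.countP_pos, eq_comm]

/-- From a strict countP inequality, extract an element of the multiset
difference satisfying the predicate. -/
lemma exists_mem_sub_of_countP_lt [DecidableEq V] {p : V × V → Prop} [DecidablePred p]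
    {A B : Multiset (V × V)}
    (h : A.countP p < B.countP p) : ∃ q ∈ B - A, p q := by
  rw [← Multiset.countP_pos]
  have h2 : B.countP p ≤ (B - A).countP p + A.countP p := by
    rw [← Multiset.countP_add]
    exact Multiset.countP_le_of_le _ le_tsub_add
  omega

lemma countP_sub_add [DecidableEq V] (p : V × V → Prop) [DecidablePred p]
    (A B : Multiset (V × V)) :
    (A - B).countP p + B.countP p = (B - A).countP p + A.countP p := by
  rw [← Multiset.countP_add, ← Multiset.countP_add, ← Multiset.union_def,
    ← Multiset.union_def, Multiset.union_comm]

/-- Adding a single valid pair to a vertex with unmet demand from a vertex with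
spare capacity. -/
lemma step_add [Fintype V] [DecidableEq V] (G : SimpleGraph V) (d c : V → ℕ)
    (A : Multiset (V × V)) (q : V × V)
    (hA : ValidPairs G A) (hAd : ∀ v, inCount A v ≤ d v)
    (hAc : ∀ u, outCount A u ≤ c u)
    (hq : G.Adj q.1 q.2 ∨ q.1 = q.2)
    (hv : inCount A q.2 < d q.2) (hu : outCount A q.1 < c q.1) :
    ∃ A'' : Multiset (V × V), ValidPairs G A'' ∧ (∀ v, inCount A'' v ≤ d v) ∧
      (∀ u, outCount A'' u ≤ c u) ∧
      Multiset.card A < Multiset.card A'' ∧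
      (domSet A'').card ≤ (domSet A).card + 1 := by
  refine ⟨q ::ₘ A, ?_, ?_, ?_, ?_, ?_⟩
  · intro p hp
    rcases Multiset.mem_cons.1 hp with h | h
    · subst h; exact hq
    · exact hA p h
  · intro v
    have h0 := hAd v
    have h1 := hv
    simp only [inCount] at h0 h1 ⊢
    rw [Multiset.countP_cons]
    split_ifs with h
    · subst h; omega
    · omega
  · intro u
    have h0 := hAc u
    have h1 := hu
    simp only [outCount] at h0 h1 ⊢
    rw [Multiset.countP_cons]
    split_ifs with h
    · subst h; omega
    · omega
  · simp
  · have hd : domSet (q ::ₘ A) = insert q.1 (domSet A) := by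
      simp [domSet]
    rw [hd]
    exact Finset.card_insert_le _ _

lemma aux [Fintype V] [DecidableEq V] (G : SimpleGraph V) (d c : V → ℕ) :
    ∀ n (A B : Multiset (V × V)), Multiset.card (A - B) ≤ n →
      ValidPairs G A → ValidPairs G B →
      (∀ v, inCount A v ≤ d v) → (∀ u, outCount A u ≤ c u) →
      (∀ u, outCount B u ≤ c u) →
      (∀ v, inCount A v ≤ inCount B v) →
      (∃ v, inCount A v < inCount B v ∧ inCount A v < d v) →
      ∃ A'' : Multiset (V × V), ValidPairs G A'' ∧ (∀ v, inCount A'' v ≤ d v) ∧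
        (∀ u, outCount A'' u ≤ c u) ∧
        Multiset.card A < Multiset.card A'' ∧
        (domSet A'').card ≤ (domSet A).card + 1 := by
  intro n
  induction n with
  | zero =>
    intro A B hcard hA hB hAd hAc hBc hle hstrict
    obtain ⟨v, hvB, hvd⟩ := hstrict
    obtain ⟨q, hqmem, hq2⟩ := exists_mem_sub_of_countP_lt (p := fun p => p.2 = v) hvB
    have hqB : q ∈ B := Multiset.mem_of_le (Multiset.sub_le_self _ _) hqmem
    have hqAB : A - B = 0 := Multiset.card_eq_zero.1 (Nat.le_zero.1 hcard)
    have hcap : outCount A q.1 < c q.1 := by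
      by_contra hcap
      push_neg at hcap
      have h1 : outCount A q.1 = c q.1 := le_antisymm (hAc _) hcap
      have h2 := countP_sub_add (fun p => p.1 = q.1) A B
      have h3 : 0 < (B - A).countP (fun p => p.1 = q.1) :=
        Multiset.countP_pos.2 ⟨q, hqmem, rfl⟩
      have h4 : (A - B).countP (fun p => p.1 = q.1) = 0 := by
        rw [hqAB, Multiset.countP_zero]
      have h5 := hBc q.1
      rw [outCount] at h1 h5
      omega
    have hvd' : inCount A q.2 < d q.2 := by rw [hq2]; exact hvd
    exact step_add G d c A q hA hAd hAc (hB q hqB) hvd' hcap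
  | succ n ih =>
    intro A B hcard hA hB hAd hAc hBc hle hstrict
    obtain ⟨v, hvB, hvd⟩ := hstrict
    obtain ⟨q, hqmem, hq2⟩ := exists_mem_sub_of_countP_lt (p := fun p => p.2 = v) hvB
    have hqB : q ∈ B := Multiset.mem_of_le (Multiset.sub_le_self _ _) hqmem
    have hqcount : Multiset.count q A < Multiset.count q B := by
      have := Multiset.count_pos.2 hqmem
      rw [Multiset.count_sub] at this
      omega
    by_cases hcap : outCount A q.1 < c q.1
    · have hvd' : inCount A q.2 < d q.2 := by rw [hq2]; exact hvd
      exact step_add G d c A q hA hAd hAc (hB q hqB) hvd' hcap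
    · push_neg at hcap
      have h1 : outCount A q.1 = c q.1 := le_antisymm (hAc _) hcap
      -- find s ∈ A - B with s.1 = q.1
      have h2 := countP_sub_add (fun p => p.1 = q.1) A B
      have h3 : 0 < (B - A).countP (fun p => p.1 = q.1) :=
        Multiset.countP_pos.2 ⟨q, hqmem, rfl⟩
      have h5 := hBc q.1
      have h6 : 0 < (A - B).countP (fun p => p.1 = q.1) := by
        rw [outCount] at h1 h5
        omega
      obtain ⟨s, hsmem, hs1⟩ := Multiset.countP_pos.1 h6
      have hsA : s ∈ A := Multiset.mem_of_le (Multiset.sub_le_self _ _) hsmem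
      have hscount : Multiset.count s B < Multiset.count s A := by
        have := Multiset.count_pos.2 hsmem
        rw [Multiset.count_sub] at this
        omega
      have hsq : s ≠ q := by
        intro h
        rw [h] at hscount
        omega
      -- the swapped assignment A' = A - s + q
      set E := A.erase s with hE
      have hAeq : s ::ₘ E = A := Multiset.cons_erase hsA
      set A' := q ::ₘ E with hA'
      have hinA : ∀ x, inCount A x = inCount E x + (if s.2 = x then 1 else 0) := by
        intro x
        rw [inCount, ← hAeq, Multiset.countP_cons, inCount]
      have hinA' : ∀ x, inCount A' x = inCount E x + (if q.2 = x then 1 else 0) := by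
        intro x
        rw [inCount, hA', Multiset.countP_cons, inCount]
      have hout : ∀ x, outCount A' x = outCount A x := by
        intro x
        rw [outCount, outCount, ← hAeq, hA', Multiset.countP_cons,
          Multiset.countP_cons, hs1]
      -- validity
      have hA'valid : ValidPairs G A' := by
        intro p hp
        rcases Multiset.mem_cons.1 hp with h | h
        · rw [h]; exact hB q hqB
        · exact hA p (Multiset.mem_of_le (Multiset.erase_le _ _) h)
      have hvdq : inCount A q.2 < d q.2 := by rw [hq2]; exact hvd
      have hvBq : inCount A q.2 < inCount B q.2 := by rw [hq2]; exact hvB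
      -- demand bounds for A'
      have hA'd : ∀ x, inCount A' x ≤ d x := by
        intro x
        have e1 := hinA x
        have e2 := hinA' x
        have h0 := hAd x
        by_cases hx : q.2 = x
        · have hvdx : inCount A x < d x := by rw [← hx]; exact hvdq
          rw [if_pos hx] at e2
          split_ifs at e1 <;> omega
        · rw [if_neg hx] at e2
          split_ifs at e1 <;> omega
      have hA'le : ∀ x, inCount A' x ≤ inCount B x := by
        intro x
        have e1 := hinA x
        have e2 := hinA' x
        have h0 := hle x
        by_cases hx : q.2 = x
        · have hvBx : inCount A x < inCount B x := by rw [← hx]; exact hvBq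
          rw [if_pos hx] at e2
          split_ifs at e1 <;> omega
        · rw [if_neg hx] at e2
          split_ifs at e1 <;> omega
      -- strict slack for A'
      have hA'strict : ∃ x, inCount A' x < inCount B x ∧ inCount A' x < d x := by
        by_cases hw : s.2 = q.2
        · refine ⟨q.2, ?_, ?_⟩
          · have e1 := hinA q.2
            have e2 := hinA' q.2
            rw [if_pos hw] at e1
            rw [if_pos rfl] at e2
            omega
          · have e1 := hinA q.2
            have e2 := hinA' q.2
            rw [if_pos hw] at e1
            rw [if_pos rfl] at e2
            omega
        · refine ⟨s.2, ?_, ?_⟩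
          · have e1 := hinA s.2
            have e2 := hinA' s.2
            have h0 := hle s.2
            rw [if_pos rfl] at e1
            rw [if_neg (fun h => hw h.symm)] at e2
            omega
          · have e1 := hinA s.2
            have e2 := hinA' s.2
            have h0 := hAd s.2
            rw [if_pos rfl] at e1
            rw [if_neg (fun h => hw h.symm)] at e2
            omega
      -- capacity bounds for A'
      have hA'c : ∀ u, outCount A' u ≤ c u := fun u => (hout u) ▸ hAc u
      -- the measure decreases
      have hsub : A' - B ≤ (A - B).erase s := by
        rw [Multiset.le_iff_count]
        intro x
        have hcA' : Multiset.count x A' =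
            Multiset.count x E + (if x = q then 1 else 0) := by
          rw [hA', Multiset.count_cons]
        have hcA : Multiset.count x A =
            Multiset.count x E + (if x = s then 1 else 0) := by
          rw [← hAeq, Multiset.count_cons]
        have hcsub : Multiset.count x (A' - B) =
            Multiset.count x A' - Multiset.count x B := Multiset.count_sub _ _ _
        have hcsub2 : Multiset.count x (A - B) =
            Multiset.count x A - Multiset.count x B := Multiset.count_sub _ _ _
        by_cases hxs : x = s
        · subst hxs
          rw [Multiset.count_erase_self]
          rw [if_neg hsq] at hcA'
          rw [if_pos rfl] at hcA
          omega
        · rw [Multiset.count_erase_of_ne hxs]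
          rw [if_neg hxs] at hcA
          by_cases hxq : x = q
          · subst hxq
            rw [if_pos rfl] at hcA'
            omega
          · rw [if_neg hxq] at hcA'
            omega
      have hsAB : s ∈ A - B := hsmem
      have hmeas : Multiset.card (A' - B) ≤ n := by
        have h7 := Multiset.card_le_card hsub
        have h8 : Multiset.card ((A - B).erase s) = Multiset.card (A - B) - 1 :=
          Multiset.card_erase_of_mem hsAB
        have h9 : 0 < Multiset.card (A - B) := Multiset.card_pos_iff_exists_mem.2 ⟨s, hsAB⟩
        omega
      obtain ⟨A'', p1, p2, p3, p4, p5⟩ :=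
        ih A' B hmeas hA'valid hB hA'd hA'c hBc hA'le hA'strict
      have hcardeq : Multiset.card A' = Multiset.card A := by
        rw [hA', ← hAeq]
        simp
      have hdomeq : domSet A' = domSet A := by
        ext x
        rw [mem_domSet, mem_domSet, hout]
      refine ⟨A'', p1, p2, p3, ?_, ?_⟩
      · omega
      · rw [← hdomeq]
        exact p5

/-- Improvement lemma: given a proper assignment with positive unmet demand,
if a proper covering assignment exists then there is a proper assignment with
strictly less unmet demand and at most one more dominating vertex. -/
theorem stmt2 [Fintype V] [DecidableEq V] (G : SimpleGraph V)
    (d c : V → ℕ) (A : Multiset (V × V))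
    (hA : ValidPairs G A) (hAd : ∀ v, inCount A v ≤ d v)
    (hAc : ∀ u, outCount A u ≤ c u)
    (ht : 0 < unmet d A)
    (hex : ∃ B : Multiset (V × V), ValidPairs G B ∧
      (∀ u, outCount B u ≤ c u) ∧ (∀ v, inCount B v = d v)) :
    ∃ A'' : Multiset (V × V), ValidPairs G A'' ∧ (∀ v, inCount A'' v ≤ d v) ∧
      (∀ u, outCount A'' u ≤ c u) ∧ unmet d A'' < unmet d A ∧
      (domSet A'').card ≤ (domSet A).card + 1 := by
  obtain ⟨B, hBv, hBc, hBd⟩ := hex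
  have hv : ∃ v, inCount A v < d v := by
    by_contra h
    push_neg at h
    have hz : unmet d A = 0 :=
      Finset.sum_eq_zero (fun v _ => by have h1 := h v; omega)
    omega
  obtain ⟨v, hv⟩ := hv
  obtain ⟨A'', h1, h2, h3, h4, h5⟩ :=
    aux G d c (Multiset.card (A - B)) A B le_rfl hA hBv hAd hAc hBc
      (fun v => le_of_le_of_eq (hAd v) (hBd v).symm)
      ⟨v, lt_of_lt_of_eq hv (hBd v).symm, hv⟩
  refine ⟨A'', h1, h2, h3, ?_, h5⟩
  rw [unmet_eq d A hAd, unmet_eq d A'' h2]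
  have hA''card : Multiset.card A'' ≤ ∑ v, d v := by
    rw [← sum_inCount A'']
    exact Finset.sum_le_sum (fun v _ => h2 v)
  omega
end

section
/- Let A be an assignment for a capacitated domination instance on a graph G, viewed as a directed multigraph where (u,v) ∈ A gives an arc u → v. If A contains a directed cycle of length at least 2 (no self-loops), then replacing every arc (p_i, p_{i+1}) of the cycle with the self-loop (p_{i+1}, p_{i+1}) yields an assignment A' with the same total unmet demand t(A') = t(A), and each vertex's out-count unchanged, so A' is proper whenever A is. -/
open Finset

variable {V : Type*}

private lemma shift_aux (g : ℕ → Prop) [DecidablePred g] (l : ℕ) :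
    Multiset.countP (fun i => g (i + 1)) (Multiset.range l) + (if g 0 then 1 else 0)
      = Multiset.countP g (Multiset.range l) + (if g l then 1 else 0) := by
  induction l with
  | zero => simp
  | succ n ih =>
      rw [Multiset.range_succ, Multiset.countP_cons, Multiset.countP_cons]
      by_cases h0 : g 0 <;> by_cases hn : g n <;> by_cases hn1 : g (n+1) <;>
        simp [h0, hn, hn1] at ih ⊢ <;> omega

private lemma shift (g : ℕ → Prop) [DecidablePred g] (l : ℕ) (h : g l ↔ g 0) :
    Multiset.countP (fun i => g (i + 1)) (Multiset.range l)
      = Multiset.countP g (Multiset.range l) := by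
  have key := shift_aux g l
  by_cases h0 : g 0
  · have hgl : g l := h.mpr h0
    simp [h0, hgl] at key; omega
  · have hgl : ¬ g l := fun hh => h0 (h.mp hh)
    simp [h0, hgl] at key; omega

/-- Replacing the arcs of a directed cycle (of length at least 2, with no
self-loops) by self-loops at their heads preserves all in-counts and
out-counts, hence total unmet demand and properness. -/
theorem stmt4 [Fintype V] [DecidableEq V] (G : SimpleGraph V)
    (d c : V → ℕ) (A : Multiset (V × V)) (hA : ValidPairs G A)
    (l : ℕ) (hl : 2 ≤ l) (p : ℕ → V) (hclose : p l = p 0)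
    (hnoloop : ∀ i < l, p i ≠ p (i + 1))
    (hsub : (((List.range l).map (fun i => (p i, p (i + 1)))) : Multiset (V × V)) ≤ A) :
    (∀ v, inCount
        ((A - (((List.range l).map (fun i => (p i, p (i + 1)))) : Multiset (V × V))) +
          (((List.range l).map (fun i => (p (i + 1), p (i + 1)))) : Multiset (V × V))) v
        = inCount A v) ∧
    (∀ u, outCount
        ((A - (((List.range l).map (fun i => (p i, p (i + 1)))) : Multiset (V × V))) +
          (((List.range l).map (fun i => (p (i + 1), p (i + 1)))) : Multiset (V × V))) u
        = outCount A u) ∧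
    unmet d
        ((A - (((List.range l).map (fun i => (p i, p (i + 1)))) : Multiset (V × V))) +
          (((List.range l).map (fun i => (p (i + 1), p (i + 1)))) : Multiset (V × V)))
      = unmet d A ∧
    ((∀ u, outCount A u ≤ c u) →
      ∀ u, outCount
        ((A - (((List.range l).map (fun i => (p i, p (i + 1)))) : Multiset (V × V))) +
          (((List.range l).map (fun i => (p (i + 1), p (i + 1)))) : Multiset (V × V))) u
        ≤ c u) := by
  set C : Multiset (V × V) := (((List.range l).map (fun i => (p i, p (i + 1)))) : Multiset (V × V)) with hCdef
  set L : Multiset (V × V) := (((List.range l).map (fun i => (p (i + 1), p (i + 1)))) : Multiset (V × V)) with hLdef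
  have hCmap : C = Multiset.map (fun i => (p i, p (i + 1))) (Multiset.range l) := rfl
  have hLmap : L = Multiset.map (fun i => (p (i + 1), p (i + 1))) (Multiset.range l) := rfl
  have key : ∀ (q : V × V → Prop) [DecidablePred q],
      Multiset.countP q C = Multiset.countP q L →
      Multiset.countP q (A - C + L) = Multiset.countP q A := by
    intro q _ h
    rw [Multiset.countP_add, ← h, ← Multiset.countP_add, tsub_add_cancel_of_le hsub]
  have hin : ∀ v, inCount (A - C + L) v = inCount A v := by
    intro v
    apply key
    rw [hCmap, hLmap, Multiset.countP_map, Multiset.countP_map]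
  have hout : ∀ u, outCount (A - C + L) u = outCount A u := by
    intro u
    apply key
    rw [hCmap, hLmap, Multiset.countP_map, Multiset.countP_map,
      ← Multiset.countP_eq_card_filter, ← Multiset.countP_eq_card_filter]
    exact (shift (fun i => p i = u) l (by show p l = u ↔ p 0 = u; rw [hclose])).symm
  refine ⟨hin, hout, ?_, ?_⟩
  · unfold unmet
    exact Finset.sum_congr rfl fun v _ => by rw [hin v]
  · intro h u
    rw [hout u]; exact h u
end
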